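/- arXiv:2111.00910 — 8 statements merged into one kernel-verified Lean document; each statement's English description precedes it below -/
import Mathlib

section
/- Let 1 ≤ t_1 < ... < t_r < n and let v = (v_1,...,v_r) be a vector of integers such that: each v_i is even, 0 ≤ v_i ≤ min{2t_i, 2(n-t_i)} for all i, and |v_{i+1} - v_i| ≤ 2(t_{i+1}-t_i) for 1 ≤ i ≤ r-1. Then there exist flags F = (F_1,...,F_r) and F' = (F'_1,...,F'_r) of type (t_1,...,t_r) on F_q^n such that d_S(F_i, F'_i) = v_i for all 1 ≤ i ≤ r. -/
open Module

/-- Coordinate subspace of `Fin n → K` supported on indices in `S`. -/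
def coordSub (K : Type*) [Field K] (n : ℕ) (S : Finset ℕ) : Submodule K (Fin n → K) where
  carrier := {x | ∀ i : Fin n, (i : ℕ) ∉ S → x i = 0}
  add_mem' := by intro a b ha hb i hi; simp [ha i hi, hb i hi]
  zero_mem' := by intro i hi; rfl
  smul_mem' := by intro c x hx i hi; simp [hx i hi]

lemma mem_coordSub {K : Type*} [Field K] {n : ℕ} {S : Finset ℕ} {x : Fin n → K} :
    x ∈ coordSub K n S ↔ ∀ i : Fin n, (i : ℕ) ∉ S → x i = 0 := Iff.rfl

lemma coordSub_mono {K : Type*} [Field K] {n : ℕ} {S T : Finset ℕ} (h : S ⊆ T) :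
    coordSub K n S ≤ coordSub K n T := by
  intro x hx i hi
  exact hx i fun hS => hi (h hS)

lemma coordSub_inf {K : Type*} [Field K] {n : ℕ} (S T : Finset ℕ) :
    coordSub K n S ⊓ coordSub K n T = coordSub K n (S ∩ T) := by
  ext x
  simp only [Submodule.mem_inf, mem_coordSub, Finset.mem_inter]
  constructor
  · rintro ⟨h1, h2⟩ i hi
    by_cases hS : (i : ℕ) ∈ S
    · exact h2 i fun hT => hi ⟨hS, hT⟩
    · exact h1 i hS
  · intro h
    exact ⟨fun i hi => h i fun h' => hi h'.1, fun i hi => h i fun h' => hi h'.2⟩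

lemma coordSub_sup {K : Type*} [Field K] {n : ℕ} (S T : Finset ℕ) :
    coordSub K n S ⊔ coordSub K n T = coordSub K n (S ∪ T) := by
  apply le_antisymm
  · exact sup_le (coordSub_mono Finset.subset_union_left)
      (coordSub_mono Finset.subset_union_right)
  · intro x hx
    rw [Submodule.mem_sup]
    refine ⟨fun i => if (i : ℕ) ∈ S then x i else 0, ?_,
            fun i => if (i : ℕ) ∈ S then 0 else x i, ?_, ?_⟩
    · intro i hi; simp [hi]
    · intro i hi
      by_cases hS : (i : ℕ) ∈ S
      · simp [hS]
      · simp only [hS, if_false]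
        exact hx i (by simp [hS, hi])
    · ext i; by_cases hS : (i : ℕ) ∈ S <;> simp [hS]

lemma coordSub_finrank {K : Type*} [Field K] {n : ℕ} (S : Finset ℕ)
    (hS : ∀ m ∈ S, m < n) : finrank K (coordSub K n S) = S.card := by
  let e : coordSub K n S ≃ₗ[K] ({i : Fin n // (i : ℕ) ∈ S} → K) :=
    { toFun := fun x i => x.1 i
      map_add' := fun x y => rfl
      map_smul' := fun c x => rfl
      invFun := fun f =>
        ⟨fun i => if h : (i : ℕ) ∈ S then f ⟨i, h⟩ else 0, by intro i hi; simp [hi]⟩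
      left_inv := fun x => by
        ext i
        by_cases h : (i : ℕ) ∈ S
        · simp [h]
        · simp only [h, dif_neg, not_false_iff]
          exact (x.2 i h).symm
      right_inv := fun f => by ext i; simp [i.2] }
  rw [e.finrank_eq, Module.finrank_fintype_fun_eq_card]
  rw [Fintype.card_congr
    (⟨fun i => (⟨(i : Fin n), i.2⟩ : {m // m ∈ S}),
      fun j => ⟨⟨j.1, hS j.1 j.2⟩, j.2⟩,
      fun i => by ext; rfl, fun j => by ext; rfl⟩ :
      {i : Fin n // (i : ℕ) ∈ S} ≃ {m // m ∈ S})]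
  exact Fintype.card_coe S

theorem stmt3 {K : Type*} [Field K] [Fintype K] (n r : ℕ) (hn : 2 ≤ n) (hr : 1 ≤ r)
    (t : ℕ → ℕ) (ht1 : 1 ≤ t 1) (htr : t r < n)
    (htmono : ∀ j, 1 ≤ j → j < r → t j < t (j + 1))
    (v : ℕ → ℤ)
    (hveven : ∀ j, 1 ≤ j → j ≤ r → Even (v j))
    (hvbounds : ∀ j, 1 ≤ j → j ≤ r →
      0 ≤ v j ∧ v j ≤ min (2 * (t j : ℤ)) (2 * ((n : ℤ) - (t j : ℤ))))
    (hvadj : ∀ j, 1 ≤ j → j < r →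
      |v (j + 1) - v j| ≤ 2 * ((t (j + 1) : ℤ) - (t j : ℤ))) :
    ∃ F F' : ℕ → Submodule K (Fin n → K),
      (∀ j, 1 ≤ j → j ≤ r → finrank K ↥(F j) = t j ∧ finrank K ↥(F' j) = t j) ∧
      (∀ j, 1 ≤ j → j < r → F j ≤ F (j + 1) ∧ F' j ≤ F' (j + 1)) ∧
      (∀ j, 1 ≤ j → j ≤ r →
        (finrank K ↥(F j ⊔ F' j) : ℤ) - (finrank K ↥(F j ⊓ F' j) : ℤ) = v j) := by
  classical
  set s : ℕ → ℕ := fun j => (v j).toNat / 2 with hsdef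
  have hvs : ∀ j, 1 ≤ j → j ≤ r → v j = 2 * (s j : ℤ) := by
    intro j h1 h2
    obtain ⟨c, hc⟩ := hveven j h1 h2
    have h0 := (hvbounds j h1 h2).1
    simp only [hsdef]
    omega
  have hst : ∀ j, 1 ≤ j → j ≤ r → s j ≤ t j ∧ s j + t j ≤ n := by
    intro j h1 h2
    have h := (hvbounds j h1 h2).2
    have h0 := (hvbounds j h1 h2).1
    have hv := hvs j h1 h2
    rw [le_min_iff] at h
    omega
  have hadj : ∀ j, 1 ≤ j → j < r →
      s j ≤ s (j+1) + (t (j+1) - t j) ∧ s (j+1) ≤ s j + (t (j+1) - t j) := by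
    intro j h1 hlt
    have h := hvadj j h1 hlt
    rw [abs_le] at h
    have hv1 := hvs j h1 (le_of_lt hlt)
    have hv2 := hvs (j+1) (by omega) (by omega)
    have htj := htmono j h1 hlt
    omega
  set a : ℕ → ℕ := fun j => ∑ i ∈ Finset.Ico j r, (s (i+1) - s i) with hadef
  have har : a r = 0 := by simp [hadef]
  have harec : ∀ j, j < r → a j = (s (j+1) - s j) + a (j+1) := by
    intro j hj
    simp only [hadef]
    rw [Finset.sum_eq_sum_Ico_succ_bot hj]
  have hbound : ∀ j, 1 ≤ j → j ≤ r → a j + s j + t j ≤ n := by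
    have key : ∀ d j, 1 ≤ j → j + d = r → a j + s j + t j ≤ n := by
      intro d
      induction d with
      | zero =>
        intro j h1 h2
        have hjr : j = r := by omega
        subst hjr
        have := (hst j h1 le_rfl).2
        omega
      | succ d ih =>
        intro j h1 h2
        have hjr : j < r := by omega
        have h3 := harec j hjr
        have h4 := ih (j+1) (by omega) (by omega)
        have h5 := hadj j h1 hjr
        have h6 := htmono j h1 hjr
        omega
    intro j h1 h2
    exact key (r - j) j h1 (by omega)
  refine ⟨fun j => coordSub K n (Finset.Ico (a j) (a j + t j)),
          fun j => coordSub K n (Finset.Ico (a j + s j) (a j + s j + t j)), ?_, ?_, ?_⟩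
  · intro j h1 h2
    have hb := hbound j h1 h2
    constructor
    · rw [coordSub_finrank]
      · rw [Nat.card_Ico]; omega
      · intro m hm; rw [Finset.mem_Ico] at hm; omega
    · rw [coordSub_finrank]
      · rw [Nat.card_Ico]; omega
      · intro m hm; rw [Finset.mem_Ico] at hm; omega
  · intro j h1 hlt
    have h3 := harec j hlt
    have h5 := hadj j h1 hlt
    have h6 := htmono j h1 hlt
    constructor
    · exact coordSub_mono (Finset.Ico_subset_Ico (by omega) (by omega))
    · exact coordSub_mono (Finset.Ico_subset_Ico (by omega) (by omega))
  · intro j h1 h2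
    have hb := hbound j h1 h2
    have hs1 := (hst j h1 h2).1
    have hv := hvs j h1 h2
    rw [coordSub_sup, coordSub_inf]
    have hunion : Finset.Ico (a j) (a j + t j) ∪
        Finset.Ico (a j + s j) (a j + s j + t j) =
        Finset.Ico (a j) (a j + s j + t j) := by
      ext m
      simp only [Finset.mem_union, Finset.mem_Ico]
      omega
    have hinter : Finset.Ico (a j) (a j + t j) ∩
        Finset.Ico (a j + s j) (a j + s j + t j) =
        Finset.Ico (a j + s j) (a j + t j) := by
      ext m
      simp only [Finset.mem_inter, Finset.mem_Ico]
      omega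
    rw [hunion, hinter, coordSub_finrank, coordSub_finrank]
    · rw [Nat.card_Ico, Nat.card_Ico]
      omega
    · intro m hm; rw [Finset.mem_Ico] at hm; omega
    · intro m hm; rw [Finset.mem_Ico] at hm; omega
end

section
/- For every n ≥ 2 and every 1 ≤ i ≤ n-1, Σ_{j=1}^{n-1} min{2j, 2(n-j), 2|i-j|} = D^i + D^{n-i}, where D^m = ⌊m²/2⌋ (i.e., D^m = m²/2 if m is even and (m²-1)/2 if m is odd, with D^1 = 0). -/
/-- `D^m = Σ_{k=1}^{m-1} min{2k, 2(m-k)}` would equal `⌊m²/2⌋`; here defined as `⌊m²/2⌋`. -/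
def Dm (m : ℕ) : ℕ := m ^ 2 / 2

/-- `D^n`, the maximum full flag distance: `Σ_{k=1}^{n-1} min{2k, 2(n-k)}`. -/
def Dfull (n : ℕ) : ℕ := ∑ k ∈ Finset.Icc 1 (n - 1), min (2 * k) (2 * (n - k))

/-- The `j`-th component `D(i)^n_j = min{2j, 2(n-j), 2|i-j|}`. -/
def Dc (n i j : ℕ) : ℕ :=
  min (2 * j) (min (2 * (n - j)) (2 * ((i : ℤ) - (j : ℤ)).natAbs))

/-- `D(i)^n = Σ_{j=1}^{n-1} min{2j, 2(n-j), 2|i-j|}`. -/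
def Di (n i : ℕ) : ℕ := ∑ j ∈ Finset.Icc 1 (n - 1), Dc n i j

lemma gauss (K : ℕ) : ∑ j ∈ Finset.Ioc 0 K, 2 * j = K * (K + 1) := by
  induction K with
  | zero => simp
  | succ k ih =>
    rw [Finset.sum_Ioc_succ_top (Nat.zero_le _), ih]
    ring

lemma sumMin (m : ℕ) : ∑ j ∈ Finset.Icc 1 (m - 1), min (2 * j) (2 * (m - j)) = m ^ 2 / 2 := by
  match m with
  | 0 => simp
  | 1 => simp
  | (m + 2) =>
    set M := m + 2 with hMdef
    have hM : 2 ≤ M := by omega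
    set h := M / 2 with hh
    have h1 : 1 ≤ h := by omega
    have h2 : h ≤ M - 1 := by omega
    rw [show (Finset.Icc 1 (M - 1)) = Finset.Ioc 0 (M - 1) from Finset.Icc_add_one_left_eq_Ioc 0 (M - 1)]
    rw [← Finset.sum_Ioc_consecutive _ (Nat.zero_le h) h2]
    have e1 : ∑ j ∈ Finset.Ioc 0 h, min (2 * j) (2 * (M - j)) = h * (h + 1) := by
      rw [← gauss h]
      refine Finset.sum_congr rfl fun j hj => ?_
      rw [Finset.mem_Ioc] at hj
      omega
    have e2 : ∑ j ∈ Finset.Ioc h (M - 1), min (2 * j) (2 * (M - j))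
        = (M - 1 - h) * (M - 1 - h + 1) := by
      rw [← gauss (M - 1 - h)]
      refine Finset.sum_nbij' (fun j => M - j) (fun k => M - k) ?_ ?_ ?_ ?_ ?_ <;>
        intro a ha <;> simp only [Finset.mem_Ioc] at * <;> omega
    rw [e1, e2]
    rcases Nat.even_or_odd M with ⟨k, hk⟩ | ⟨k, hk⟩
    · have hk1 : h = k := by omega
      have hsq : M ^ 2 = 2 * (2 * k ^ 2) := by rw [hk]; ring
      rw [hsq, Nat.mul_div_cancel_left _ (by norm_num), hk1]
      have h3 : M - 1 - k = k - 1 := by omega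
      rw [h3]
      obtain ⟨t, rfl⟩ : ∃ t, k = t + 1 := ⟨k - 1, by omega⟩
      simp only [Nat.add_sub_cancel]
      ring
    · have hk1 : h = k := by omega
      have hsq : M ^ 2 = 2 * (2 * k ^ 2 + 2 * k) + 1 := by rw [hk]; ring
      rw [hsq, Nat.mul_add_div (by norm_num), hk1]
      have h3 : M - 1 - k = k := by omega
      rw [h3]
      simp
      ring

theorem stmt6 (n i : ℕ) (hn : 2 ≤ n) (hi1 : 1 ≤ i) (hi2 : i ≤ n - 1) :
    Di n i = Dm i + Dm (n - i) := by
  unfold Di Dm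
  rw [show (Finset.Icc 1 (n - 1)) = Finset.Ioc 0 (n - 1) from Finset.Icc_add_one_left_eq_Ioc 0 (n - 1)]
  rw [← Finset.sum_Ioc_consecutive _ (Nat.zero_le i) hi2]
  have e1 : ∑ j ∈ Finset.Ioc 0 i, Dc n i j = i ^ 2 / 2 := by
    rw [← sumMin i,
      show (Finset.Icc 1 (i - 1)) = Finset.Ioc 0 (i - 1) from Finset.Icc_add_one_left_eq_Ioc 0 (i - 1)]
    rw [show Finset.Ioc 0 i = Finset.Ioc 0 ((i - 1) + 1) from by rw [Nat.sub_add_cancel hi1],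
      Finset.sum_Ioc_succ_top (Nat.zero_le _), Nat.sub_add_cancel hi1]
    have hz : Dc n i i = 0 := by unfold Dc; omega
    rw [hz, add_zero]
    refine Finset.sum_congr rfl fun j hj => ?_
    rw [Finset.mem_Ioc] at hj
    unfold Dc
    omega
  have e2 : ∑ j ∈ Finset.Ioc i (n - 1), Dc n i j = (n - i) ^ 2 / 2 := by
    rw [← sumMin (n - i),
      show (Finset.Icc 1 (n - i - 1)) = Finset.Ioc 0 (n - i - 1) from
        Finset.Icc_add_one_left_eq_Ioc 0 (n - i - 1)]
    refine Finset.sum_nbij' (fun j => j - i) (fun k => k + i) ?_ ?_ ?_ ?_ ?_ <;>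
        intro a ha <;> simp only [Finset.mem_Ioc, Dc] at * <;> omega
  rw [e1, e2]
end

section
/- For every n ≥ 2 and every 1 ≤ i ≤ n-1: D(i)^n = (i² + (n-i)²)/2 if n and i are both even; D(i)^n = (i² + (n-i)² - 2)/2 if n is even and i is odd; and D(i)^n = (i² + (n-i)² - 1)/2 if n is odd. -/
lemma Tval : ∀ t : ℕ, (∑ i ∈ Finset.range t, min (2*(i+1)) (2*(t-i))) = (t+1)^2/2 := by
  intro t
  induction t using Nat.strong_induction_on with
  | _ t ih =>
    match t with
    | 0 => simp
    | 1 => simp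
    | (t+2) =>
      have h := ih t (by omega)
      rw [Finset.sum_range_succ, Finset.sum_range_succ']
      have hmid : (∑ i ∈ Finset.range t, min (2*((i+1)+1)) (2*((t+2)-(i+1))))
          = (∑ i ∈ Finset.range t, (min (2*(i+1)) (2*(t-i)) + 2)) := by
        refine Finset.sum_congr rfl fun i hi => ?_
        simp only [Finset.mem_range] at hi
        omega
      rw [hmid, Finset.sum_add_distrib, Finset.sum_const, Finset.card_range, smul_eq_mul, h]
      have h1 : (t+1)^2 = t^2 + 2*t + 1 := by ring
      have h2 : (t+2+1)^2 = t^2 + 6*t + 9 := by ring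
      omega

lemma Di_eq (n i : ℕ) (hn : 2 ≤ n) (hi1 : 1 ≤ i) (hi2 : i ≤ n - 1) :
    Di n i = i ^ 2 / 2 + (n - i) ^ 2 / 2 := by
  have hsplit : (∑ j ∈ Finset.Ioc 0 i, Dc n i j) + (∑ j ∈ Finset.Ioc i (n-1), Dc n i j)
      = ∑ j ∈ Finset.Ioc 0 (n-1), Dc n i j :=
    Finset.sum_Ioc_consecutive _ (by omega) (by omega)
  have hIcc : Finset.Icc 1 (n-1) = Finset.Ioc 0 (n-1) := by
    ext x; simp; omega
  have h1 : (∑ j ∈ Finset.Ioc 0 i, Dc n i j) = i^2/2 := by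
    have he : Finset.Ioc 0 i = Finset.Ico 1 (i+1) := by ext x; simp; omega
    rw [he, Finset.sum_Ico_eq_sum_range]
    have hr : i + 1 - 1 = i := by omega
    rw [hr]
    have h2 : ∀ k ∈ Finset.range i, Dc n i (1+k) = min (2*(k+1)) (2*(i-1-k)) := by
      intro k hk
      simp only [Finset.mem_range] at hk
      simp only [Dc]
      push_cast
      omega
    rw [Finset.sum_congr rfl h2]
    have hii : i = (i-1)+1 := by omega
    rw [hii, Finset.sum_range_succ]
    have : min (2*((i-1)+1)) (2*((i-1)+1-1-(i-1))) = 0 := by omega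
    rw [this, add_zero]
    have h3 : ∀ k ∈ Finset.range (i-1), min (2*(k+1)) (2*((i-1)+1-1-k)) = min (2*(k+1)) (2*((i-1)-k)) := by
      intro k hk; simp only [Finset.mem_range] at hk; omega
    rw [Finset.sum_congr rfl h3, Tval]
  have h2 : (∑ j ∈ Finset.Ioc i (n-1), Dc n i j) = (n-i)^2/2 := by
    have he : Finset.Ioc i (n-1) = Finset.Ico (i+1) n := by ext x; simp; omega
    rw [he, Finset.sum_Ico_eq_sum_range]
    have h2 : ∀ k ∈ Finset.range (n-(i+1)), Dc n i (i+1+k) = min (2*(k+1)) (2*((n-i-1)-k)) := by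
      intro k hk
      simp only [Finset.mem_range] at hk
      simp only [Dc]
      push_cast
      omega
    rw [Finset.sum_congr rfl h2]
    have : n - (i+1) = n - i - 1 := by omega
    rw [this, Tval]
    have : n - i - 1 + 1 = n - i := by omega
    rw [this]
  rw [Di, hIcc, ← hsplit, h1, h2]

theorem stmt8 (n i : ℕ) (hn : 2 ≤ n) (hi1 : 1 ≤ i) (hi2 : i ≤ n - 1) :
    (Even n → Even i → 2 * Di n i = i ^ 2 + (n - i) ^ 2) ∧
    (Even n → Odd i → 2 * Di n i = i ^ 2 + (n - i) ^ 2 - 2) ∧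
    (Odd n → 2 * Di n i = i ^ 2 + (n - i) ^ 2 - 1) := by
  have hpar : ∀ m : ℕ, m ^ 2 % 2 = m % 2 := by
    intro m
    rw [Nat.pow_mod]
    rcases Nat.mod_two_eq_zero_or_one m with h | h <;> rw [h] <;> norm_num
  have hd := Di_eq n i hn hi1 hi2
  have hp1 := hpar i
  have hp2 := hpar (n - i)
  rw [hd]
  simp only [Nat.even_iff, Nat.odd_iff]
  omega
end

section
/- For every n odd and 1 ≤ i < ⌊n/2⌋, it holds that D(i+1)^n = D(i)^n - (n - (2i+1)), and hence D(i+1)^n < D(i)^n. -/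
open Finset

theorem sum_Icc_one_sub_one_eq_sum_range {M : Type*} [AddCommMonoid M] {f : ℕ → M}
    (hf : f 0 = 0) (m : ℕ) : ∑ k ∈ Icc 1 (m - 1), f k = ∑ k ∈ range m, f k := by
  refine sum_subset (fun k hk ↦ ?_) (fun k hkm hk ↦ ?_)
  · simp only [mem_Icc, mem_range] at hk ⊢
    omega
  · obtain rfl : k = 0 := by
      simp only [mem_range, mem_Icc, not_and_or] at hkm hk
      omega
    exact hf

theorem Dfull_eq_sum_range (m : ℕ) :
    Dfull m = ∑ k ∈ range m, min (2 * k) (2 * (m - k)) :=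
  sum_Icc_one_sub_one_eq_sum_range (by simp) m

theorem Di_eq_sum_range (n i : ℕ) : Di n i = ∑ j ∈ range n, Dc n i j :=
  sum_Icc_one_sub_one_eq_sum_range (by simp [Dc]) n

theorem Dfull_add_two (m : ℕ) : Dfull (m + 2) = Dfull m + 2 * (m + 1) := by
  rw [Dfull_eq_sum_range, Dfull_eq_sum_range, sum_range_succ']
  have hshift : ∀ k ∈ range (m + 1),
      min (2 * (k + 1)) (2 * (m + 2 - (k + 1))) = min (2 * k) (2 * (m - k)) + 2 := by
    intro k hk
    simp only [mem_range] at hk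
    omega
  rw [sum_congr rfl hshift, sum_add_distrib, sum_const, card_range, sum_range_succ]
  simp only [mul_zero, zero_le, min_eq_left, tsub_self, min_eq_right, add_zero, smul_eq_mul]
  ring

theorem Dm_add_two (m : ℕ) : Dm (m + 2) = Dm m + 2 * (m + 1) := by
  rw [Dm, Dm, show (m + 2) ^ 2 = m ^ 2 + 2 * (2 * (m + 1)) by ring,
    Nat.add_mul_div_left _ _ two_pos]

theorem Dfull_eq_Dm : ∀ m, Dfull m = Dm m
  | 0 => rfl
  | 1 => rfl
  | m + 2 => by rw [Dfull_add_two, Dm_add_two, Dfull_eq_Dm m]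

theorem Dm_succ (m : ℕ) : Dm (m + 1) = Dm m + m + m % 2 := by
  obtain ⟨a, rfl | rfl⟩ := Nat.even_or_odd' m
  · rw [Dm, Dm, show (2 * a + 1) ^ 2 = 1 + 2 * (2 * a ^ 2 + 2 * a) by ring,
      show (2 * a) ^ 2 = 2 * (2 * a ^ 2) by ring]
    omega
  · rw [Dm, Dm, show (2 * a + 1 + 1) ^ 2 = 2 * (2 * a ^ 2 + 4 * a + 2) by ring,
      show (2 * a + 1) ^ 2 = 1 + 2 * (2 * a ^ 2 + 2 * a) by ring]
    omega

theorem Di_eq_Dfull_add_Dfull {n i : ℕ} (hi : i ≤ n) : Di n i = Dfull i + Dfull (n - i) := by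
  rw [Di_eq_sum_range, Dfull_eq_sum_range, Dfull_eq_sum_range,
    show n = i + (n - i) by omega, sum_range_add, Nat.add_sub_cancel_left]
  congr 1
  · refine sum_congr rfl fun j hj ↦ ?_
    rw [mem_range] at hj
    unfold Dc
    omega
  · refine sum_congr rfl fun k hk ↦ ?_
    rw [mem_range] at hk
    unfold Dc
    omega

theorem Di_eq_Dm_add_Dm {n i : ℕ} (hi : i ≤ n) : Di n i = Dm i + Dm (n - i) := by
  rw [Di_eq_Dfull_add_Dfull hi, Dfull_eq_Dm, Dfull_eq_Dm]

theorem stmt10_general (n i : ℕ) (hodd : Odd n) (hi2 : i < n / 2) :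
    Di n (i + 1) + (n - (2 * i + 1)) = Di n i ∧ Di n (i + 1) < Di n i := by
  have hn_odd : n % 2 = 1 := Nat.odd_iff.mp hodd
  have hsucc : Dm (n - i) = Dm (n - (i + 1)) + (n - (i + 1)) + (n - (i + 1)) % 2 := by
    rw [← Dm_succ, show n - (i + 1) + 1 = n - i by omega]
  rw [Di_eq_Dm_add_Dm (by omega), Di_eq_Dm_add_Dm (by omega), Dm_succ, hsucc]
  omega

theorem stmt10 (n i : ℕ) (hn : 2 ≤ n) (hodd : Odd n) (hi1 : 1 ≤ i) (hi2 : i < n / 2) :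
    Di n (i + 1) + (n - (2 * i + 1)) = Di n i ∧ Di n (i + 1) < Di n i :=
  stmt10_general n i hodd hi2
end

section
/- Let n ≥ 2, 1 ≤ M ≤ n-1, and 1 ≤ i_1 < i_2 < ... < i_M ≤ n-1. Then Σ_{j=1}^{n-1} min{2j, 2(n-j), 2|j-i_1|, ..., 2|j-i_M|} = D^{i_1} + D^{i_2-i_1} + ... + D^{i_M - i_{M-1}} + D^{n-i_M}, where D^m = ⌊m²/2⌋. -/
/-- The `j`-th component `min{2j, 2(n-j), 2|j-i_1|, ..., 2|j-i_M|}`, where the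
indices are `i 1, ..., i M`. -/
def DmultiComp (n M : ℕ) (hM : 1 ≤ M) (i : ℕ → ℕ) (j : ℕ) : ℕ :=
  min (2 * j) (min (2 * (n - j))
    ((Finset.Icc 1 M).inf' (Finset.nonempty_Icc.mpr hM)
      (fun l => 2 * ((j : ℤ) - (i l : ℤ)).natAbs)))

/-- `D(i_1,...,i_M)^n = Σ_{j=1}^{n-1} min{2j, 2(n-j), 2|j-i_1|, ..., 2|j-i_M|}`. -/
def Dmulti (n M : ℕ) (hM : 1 ≤ M) (i : ℕ → ℕ) : ℕ :=
  ∑ j ∈ Finset.Icc 1 (n - 1), DmultiComp n M hM i j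

private def g (m : ℕ) : ℕ := ∑ k ∈ Finset.range m, min (2*k) (2*(m-k))

private lemma g_step (m : ℕ) : g (m+2) = g m + 2*m + 2 := by
  show (∑ k ∈ Finset.range (m+1+1), min (2*k) (2*(m+2-k))) = _
  rw [Finset.sum_range_succ', Finset.sum_range_succ]
  have h : ∀ k ∈ Finset.range m, min (2*(k+1)) (2*(m+2-(k+1)))
      = min (2*k) (2*(m-k)) + 2 := by
    intro k hk; simp only [Finset.mem_range] at hk; omega
  rw [Finset.sum_congr rfl h, Finset.sum_add_distrib]
  simp only [Finset.sum_const, Finset.card_range, smul_eq_mul, g]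
  omega

private lemma g_eq (m : ℕ) : g m = Dm m := by
  induction m using Nat.strong_induction_on with
  | _ m ih =>
    match m with
    | 0 => simp [g, Dm]
    | 1 => simp [g, Dm]
    | (m+2) =>
      rw [g_step, ih m (by omega)]
      have h : (m+2)^2 = m^2 + 4*m + 4 := by ring
      unfold Dm
      omega

private lemma g_Icc (m : ℕ) : ∑ j ∈ Finset.Icc 1 m, min (2*j) (2*(m-j)) = g m := by
  have h1 : ∑ j ∈ Finset.range (m+1), min (2*j) (2*(m-j)) = g m := by
    rw [Finset.sum_range_succ]; simp [g]
  rw [← h1, show Finset.range (m+1) = insert 0 (Finset.Icc 1 m) by ext x; simp; omega,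
    Finset.sum_insert (by simp)]
  simp

private lemma sum_shift (a b : ℕ) (f : ℕ → ℕ) :
    ∑ j ∈ Finset.Icc (a+1) b, f j = ∑ k ∈ Finset.Icc 1 (b-a), f (k+a) := by
  apply Finset.sum_nbij' (i := fun j => j - a) (j := fun k => k + a)
  · intro x hx; simp only [Finset.mem_Icc] at *; omega
  · intro x hx; simp only [Finset.mem_Icc] at *; omega
  · intro x hx; simp only [Finset.mem_Icc] at hx; omega
  · intro x hx; simp only [Finset.mem_Icc] at hx; omega
  · intro x hx; simp only [Finset.mem_Icc] at hx
    congr 1; omega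

private lemma inf'_Icc_one (f : ℕ → ℕ) (h : (1:ℕ) ≤ 1) :
    (Finset.Icc 1 1).inf' (Finset.nonempty_Icc.mpr h) f = f 1 := by
  apply le_antisymm
  · exact Finset.inf'_le _ (by simp)
  · apply Finset.le_inf'
    intro b hb
    simp only [Finset.mem_Icc] at hb
    have : b = 1 := by omega
    rw [this]

/-- peel off the top index of the `inf'` -/
private lemma inf'_Icc_succ (M : ℕ) (hM : 1 ≤ M) (hM' : 1 ≤ M+1) (f : ℕ → ℕ) :
    (Finset.Icc 1 (M+1)).inf' (Finset.nonempty_Icc.mpr hM') f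
      = min ((Finset.Icc 1 M).inf' (Finset.nonempty_Icc.mpr hM) f) (f (M+1)) := by
  apply le_antisymm
  · apply le_min
    · apply Finset.le_inf'
      intro b hb
      simp only [Finset.mem_Icc] at hb
      exact Finset.inf'_le _ (by simp only [Finset.mem_Icc]; omega)
    · exact Finset.inf'_le _ (by simp)
  · apply Finset.le_inf'
    intro b hb
    simp only [Finset.mem_Icc] at hb
    rcases Nat.lt_or_ge b (M+1) with hb' | hb'
    · exact le_trans (min_le_left _ _)
        (Finset.inf'_le _ (by simp only [Finset.mem_Icc]; omega))
    · have : b = M+1 := by omega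
      rw [this]
      exact min_le_right _ _

/-- tail sum `∑_{j=a+1}^{n-1} min(2(j-a), 2(n-j)) = g (n-a)` -/
private lemma tail_sum (n a : ℕ) (ha : 1 ≤ a) (han : a ≤ n - 1) (hn : 2 ≤ n) :
    ∑ j ∈ Finset.Icc (a+1) (n-1), min (2*(j-a)) (2*(n-j)) = g (n-a) := by
  rw [sum_shift]
  have h : ∀ k ∈ Finset.Icc 1 (n-1-a), min (2*(k+a-a)) (2*(n-(k+a)))
      = min (2*k) (2*((n-a)-k)) := by
    intro k hk; simp only [Finset.mem_Icc] at hk; omega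
  rw [Finset.sum_congr rfl h]
  rw [← g_Icc (n-a),
    show Finset.Icc 1 (n-a) = insert (n-a) (Finset.Icc 1 (n-1-a)) by
      ext x; simp only [Finset.mem_Icc, Finset.mem_insert]; omega,
    Finset.sum_insert (by simp only [Finset.mem_Icc]; omega),
    show min (2*(n-a)) (2*((n-a)-(n-a))) = 0 by omega,
    zero_add]

private lemma i_mono {M : ℕ} {i : ℕ → ℕ}
    (himono : ∀ l, 1 ≤ l → l < M → i l < i (l + 1)) :
    ∀ l, 1 ≤ l → l ≤ M → i l ≤ i M := by
  have key : ∀ k l, 1 ≤ l → l + k ≤ M → i l ≤ i (l + k) := by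
    intro k
    induction k with
    | zero => intro l _ _; simp
    | succ k ih =>
      intro l hl hlk
      have h1 := ih l hl (by omega)
      have h2 := himono (l+k) (by omega) (by omega)
      calc i l ≤ i (l+k) := h1
        _ ≤ i (l+k+1) := by omega
  intro l hl hlM
  have := key (M - l) l hl (by omega)
  rwa [show l + (M - l) = M by omega] at this

/-- splitting off the last index -/
private lemma Dmulti_split (n M : ℕ) (hn : 2 ≤ n) (hM : 1 ≤ M) (hM' : 1 ≤ M+1)
    (i : ℕ → ℕ) (hi1 : 1 ≤ i 1) (hiM : i (M+1) ≤ n - 1)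
    (himono : ∀ l, 1 ≤ l → l < M+1 → i l < i (l+1)) :
    Dmulti n (M+1) hM' i = Dmulti (i (M+1)) M hM i + g (n - i (M+1)) := by
  have hmono := i_mono (M := M+1) himono
  have ha1 : 1 ≤ i (M+1) := le_trans hi1 (hmono 1 le_rfl (by omega))
  have hsplit : Finset.Icc 1 (n-1)
      = Finset.Icc 1 (i (M+1)) ∪ Finset.Icc (i (M+1)+1) (n-1) := by
    ext x; simp only [Finset.mem_Icc, Finset.mem_union]; omega
  have hdisj : Disjoint (Finset.Icc 1 (i (M+1))) (Finset.Icc (i (M+1)+1) (n-1)) := by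
    rw [Finset.disjoint_left]; intro x hx hx'
    simp only [Finset.mem_Icc] at hx hx'; omega
  unfold Dmulti
  rw [hsplit, Finset.sum_union hdisj]
  have hfirst : ∑ j ∈ Finset.Icc 1 (i (M+1)), DmultiComp n (M+1) hM' i j
      = ∑ j ∈ Finset.Icc 1 (i (M+1) - 1), DmultiComp (i (M+1)) M hM i j := by
    have hpt : ∀ j ∈ Finset.Icc 1 (i (M+1)),
        DmultiComp n (M+1) hM' i j = DmultiComp (i (M+1)) M hM i j := by
      intro j hj
      simp only [Finset.mem_Icc] at hj
      unfold DmultiComp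
      rw [inf'_Icc_succ M hM hM']
      set A := (Finset.Icc 1 M).inf' (Finset.nonempty_Icc.mpr hM)
        (fun l => 2 * ((j : ℤ) - (i l : ℤ)).natAbs) with hA
      omega
    rw [Finset.sum_congr rfl hpt,
      show Finset.Icc 1 (i (M+1)) = insert (i (M+1)) (Finset.Icc 1 (i (M+1) - 1)) by
        ext x; simp only [Finset.mem_Icc, Finset.mem_insert]; omega,
      Finset.sum_insert (by simp only [Finset.mem_Icc]; omega)]
    have hz : DmultiComp (i (M+1)) M hM i (i (M+1)) = 0 := by
      unfold DmultiComp; omega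
    rw [hz, zero_add]
  have hsecond : ∑ j ∈ Finset.Icc (i (M+1)+1) (n-1), DmultiComp n (M+1) hM' i j
      = g (n - i (M+1)) := by
    have hpt : ∀ j ∈ Finset.Icc (i (M+1)+1) (n-1),
        DmultiComp n (M+1) hM' i j = min (2*(j - i (M+1))) (2*(n-j)) := by
      intro j hj
      simp only [Finset.mem_Icc] at hj
      unfold DmultiComp
      set A := (Finset.Icc 1 (M+1)).inf' (Finset.nonempty_Icc.mpr hM')
        (fun l => 2 * ((j : ℤ) - (i l : ℤ)).natAbs) with hA
      have hAval : A = 2*(j - i (M+1)) := by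
        apply le_antisymm
        · calc A ≤ 2 * ((j : ℤ) - (i (M+1) : ℤ)).natAbs := by
                rw [hA]; exact Finset.inf'_le _ (by simp)
            _ = 2*(j - i (M+1)) := by omega
        · rw [hA]
          apply Finset.le_inf'
          intro l hl
          simp only [Finset.mem_Icc] at hl
          have hle : i l ≤ i (M+1) := hmono l hl.1 hl.2
          show 2*(j - i (M+1)) ≤ 2 * ((j : ℤ) - (i l : ℤ)).natAbs
          omega
      omega
    rw [Finset.sum_congr rfl hpt, tail_sum n (i (M+1)) ha1 hiM hn]
  rw [hfirst, hsecond]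

private lemma aux : ∀ M, 1 ≤ M → ∀ n (i : ℕ → ℕ) (hM : 1 ≤ M), 2 ≤ n → 1 ≤ i 1 →
    i M ≤ n - 1 → (∀ l, 1 ≤ l → l < M → i l < i (l+1)) →
    Dmulti n M hM i =
      g (i 1) + (∑ l ∈ Finset.Icc 1 (M - 1), g (i (l + 1) - i l)) + g (n - i M) := by
  intro M hM1
  induction M, hM1 using Nat.le_induction with
  | base =>
    intro n i hM hn hi1 hiM himono
    rw [show (1:ℕ) - 1 = 0 from rfl, show Finset.Icc 1 0 = ∅ by simp, Finset.sum_empty,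
      add_zero]
    unfold Dmulti
    have hsplit : Finset.Icc 1 (n-1) = Finset.Icc 1 (i 1) ∪ Finset.Icc (i 1+1) (n-1) := by
      ext x; simp only [Finset.mem_Icc, Finset.mem_union]; omega
    have hdisj : Disjoint (Finset.Icc 1 (i 1)) (Finset.Icc (i 1+1) (n-1)) := by
      rw [Finset.disjoint_left]; intro x hx hx'
      simp only [Finset.mem_Icc] at hx hx'; omega
    rw [hsplit, Finset.sum_union hdisj]
    have hfirst : ∑ j ∈ Finset.Icc 1 (i 1), DmultiComp n 1 hM i j
        = ∑ j ∈ Finset.Icc 1 (i 1), min (2*j) (2*(i 1-j)) := by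
      apply Finset.sum_congr rfl
      intro j hj
      simp only [Finset.mem_Icc] at hj
      unfold DmultiComp
      rw [inf'_Icc_one _ hM]
      omega
    have hsecond : ∑ j ∈ Finset.Icc (i 1+1) (n-1), DmultiComp n 1 hM i j
        = ∑ j ∈ Finset.Icc (i 1+1) (n-1), min (2*(j - i 1)) (2*(n-j)) := by
      apply Finset.sum_congr rfl
      intro j hj
      simp only [Finset.mem_Icc] at hj
      unfold DmultiComp
      rw [inf'_Icc_one _ hM]
      omega
    rw [hfirst, hsecond, g_Icc, tail_sum n (i 1) hi1 hiM hn]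
  | succ M hM1 ih =>
    intro n i hM hn hi1 hiM himono
    have hmono := i_mono (M := M+1) himono
    have haM : i M < i (M+1) := himono M hM1 (by omega)
    have h1M : i 1 ≤ i M := i_mono (fun l hl hlM => himono l hl (by omega)) 1 le_rfl hM1
    have ha2 : 2 ≤ i (M+1) := by omega
    rw [Dmulti_split n M hn hM1 hM i hi1 hiM himono]
    rw [ih (i (M+1)) i hM1 ha2 hi1 (by omega)
      (fun l hl hlM => himono l hl (by omega))]
    have hs : ∑ l ∈ Finset.Icc 1 ((M+1) - 1), g (i (l + 1) - i l)
        = (∑ l ∈ Finset.Icc 1 (M - 1), g (i (l + 1) - i l)) + g (i (M+1) - i M) := by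
      rw [show (M+1) - 1 = (M-1) + 1 by omega,
        Finset.sum_Icc_succ_top (by omega : 1 ≤ (M-1)+1),
        show (M-1)+1 = M by omega]
    rw [hs]
    ring

theorem stmt11 (n M : ℕ) (hn : 2 ≤ n) (hM : 1 ≤ M) (hMn : M ≤ n - 1)
    (i : ℕ → ℕ) (hi1 : 1 ≤ i 1) (hiM : i M ≤ n - 1)
    (himono : ∀ l, 1 ≤ l → l < M → i l < i (l + 1)) :
    Dmulti n M hM i =
      Dm (i 1) + (∑ l ∈ Finset.Icc 1 (M - 1), Dm (i (l + 1) - i l)) + Dm (n - i M) := by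
  rw [aux M hM n i hM hn hi1 hiM himono]
  simp only [g_eq]
end

section
/- Let C be a flag code of type (t_1,...,t_r) on F_q^n that is M-disjoint, i.e., no two distinct flags of C agree in M (or more) positions simultaneously. If |C| ≥ 2, then there exist r-(M-1) indices 1 ≤ i_1 < ... < i_{r-M+1} ≤ r such that d_S(C_{i_j}) > 0 for all j and d_f(C) ≥ Σ_{j=1}^{r-M+1} d_S(C_{i_j}); in particular d_f(C) ≥ 2(r - M + 1). -/
open Module Finset

/-- Subspace distance `d_S(U,V) = dim(U+V) - dim(U∩V)`. -/
noncomputable def subDist {K : Type*} [Field K] {n : ℕ}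
    (U V : Submodule K (Fin n → K)) : ℕ :=
  finrank K ↥(U ⊔ V) - finrank K ↥(U ⊓ V)

/-- Flag distance (flags indexed by `1, ..., r`). -/
noncomputable def flagDist {K : Type*} [Field K] {n : ℕ} (r : ℕ)
    (F F' : ℕ → Submodule K (Fin n → K)) : ℕ :=
  ∑ j ∈ Finset.Icc 1 r, subDist (F j) (F' j)

/-- Minimum subspace distance of the `j`-th projected code `C_j` (0 if no
distinct pair exists, in particular if `|C_j| = 1`). -/
noncomputable def projCodeDist {K : Type*} [Field K] {n : ℕ}
    (C : Set (ℕ → Submodule K (Fin n → K))) (j : ℕ) : ℕ :=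
  sInf {d : ℕ | ∃ F ∈ C, ∃ F' ∈ C, F j ≠ F' j ∧ d = subDist (F j) (F' j)}

/-- Minimum flag distance `d_f(C)` of a flag code (flags indexed by `1, ..., r`). -/
noncomputable def codeDist {K : Type*} [Field K] {n : ℕ} (r : ℕ)
    (C : Set (ℕ → Submodule K (Fin n → K))) : ℕ :=
  sInf {d : ℕ | ∃ F ∈ C, ∃ F' ∈ C,
    (∃ j, 1 ≤ j ∧ j ≤ r ∧ F j ≠ F' j) ∧ d = flagDist r F F'}

theorem stmt15 {K : Type*} [Field K] [Fintype K] (n r M : ℕ) (hn : 2 ≤ n) (hr : 1 ≤ r)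
    (hM : 1 ≤ M) (hMr : M ≤ r)
    (t : ℕ → ℕ) (ht1 : 1 ≤ t 1) (htr : t r < n)
    (htmono : ∀ j, 1 ≤ j → j < r → t j < t (j + 1))
    (C : Set (ℕ → Submodule K (Fin n → K)))
    (hdim : ∀ F ∈ C, ∀ j, 1 ≤ j → j ≤ r → finrank K ↥(F j) = t j)
    (hnest : ∀ F ∈ C, ∀ j, 1 ≤ j → j < r → F j ≤ F (j + 1))
    -- `C` contains at least two (distinct) flags
    (hcard : ∃ F ∈ C, ∃ F' ∈ C, ∃ j, 1 ≤ j ∧ j ≤ r ∧ F j ≠ F' j)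
    -- `C` is `M`-disjoint: no two distinct flags of `C` agree simultaneously in
    -- `M` (or more) positions
    (hdisj : ∀ F ∈ C, ∀ F' ∈ C, ∀ S : Finset ℕ, S ⊆ Finset.Icc 1 r → M ≤ S.card →
      (∀ j ∈ S, F j = F' j) → ∀ j, 1 ≤ j → j ≤ r → F j = F' j) :
    (∃ S : Finset ℕ, S ⊆ Finset.Icc 1 r ∧ S.card = r - M + 1 ∧
      (∀ j ∈ S, 0 < projCodeDist C j) ∧
      (∑ j ∈ S, projCodeDist C j) ≤ codeDist r C) ∧
    2 * (r - M + 1) ≤ codeDist r C := by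
  classical
  -- The code distance is achieved by some pair of distinct flags
  have hTne : {d : ℕ | ∃ F ∈ C, ∃ F' ∈ C,
      (∃ j, 1 ≤ j ∧ j ≤ r ∧ F j ≠ F' j) ∧ d = flagDist r F F'}.Nonempty := by
    obtain ⟨F, hF, F', hF', j, hj1, hjr, hne⟩ := hcard
    exact ⟨flagDist r F F', F, hF, F', hF', ⟨j, hj1, hjr, hne⟩, rfl⟩
  have hmem : codeDist r C ∈ {d : ℕ | ∃ F ∈ C, ∃ F' ∈ C,
      (∃ j, 1 ≤ j ∧ j ≤ r ∧ F j ≠ F' j) ∧ d = flagDist r F F'} :=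
    Nat.sInf_mem hTne
  obtain ⟨F, hF, F', hF', ⟨j0, hj01, hj0r, hj0ne⟩, heq⟩ := hmem
  -- Disagreement set
  set D := (Finset.Icc 1 r).filter (fun j => F j ≠ F' j) with hDdef
  have hDcard : r - M + 1 ≤ D.card := by
    by_contra hcon
    push_neg at hcon
    set A := (Finset.Icc 1 r).filter (fun j => F j = F' j) with hAdef
    have hAD : A.card + D.card = r := by
      have h1 := Finset.card_filter_add_card_filter_not
        (s := Finset.Icc 1 r) (p := fun j => F j = F' j)
      have h2 : (Finset.Icc 1 r).card = r := by simp [Nat.card_Icc]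
      simpa [hAdef, hDdef, h2] using h1
    have hAM : M ≤ A.card := by omega
    have := hdisj F hF F' hF' A (Finset.filter_subset _ _) hAM
      (fun j hj => (Finset.mem_filter.mp hj).2) j0 hj01 hj0r
    exact hj0ne this
  obtain ⟨S, hSD, hScard⟩ := Finset.exists_subset_card_eq hDcard
  have hSIcc : S ⊆ Finset.Icc 1 r := hSD.trans (Finset.filter_subset _ _)
  -- every element of the projected-distance set at j ∈ S is ≥ 2
  have key : ∀ j ∈ S, 2 ≤ projCodeDist C j ∧ projCodeDist C j ≤ subDist (F j) (F' j) := by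
    intro j hjS
    have hjIcc := Finset.mem_Icc.mp (hSIcc hjS)
    have hne : F j ≠ F' j := (Finset.mem_filter.mp (hSD hjS)).2
    have hmemj : subDist (F j) (F' j) ∈
        {d : ℕ | ∃ G ∈ C, ∃ G' ∈ C, G j ≠ G' j ∧ d = subDist (G j) (G' j)} :=
      ⟨F, hF, F', hF', hne, rfl⟩
    have hlow : ∀ d ∈ {d : ℕ | ∃ G ∈ C, ∃ G' ∈ C, G j ≠ G' j ∧ d = subDist (G j) (G' j)},
        2 ≤ d := by
      rintro d ⟨G, hG, G', hG', hGne, rfl⟩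
      -- dims equal
      have hd : finrank K ↥(G j) = finrank K ↥(G' j) := by
        rw [hdim G hG j hjIcc.1 hjIcc.2, hdim G' hG' j hjIcc.1 hjIcc.2]
      have h1 : G j < G j ⊔ G' j := by
        rcases lt_or_eq_of_le (le_sup_left : G j ≤ G j ⊔ G' j) with h' | h'
        · exact h'
        · exfalso; apply hGne
          have hVU : G' j ≤ G j := by rw [h']; exact le_sup_right
          exact (Submodule.eq_of_le_of_finrank_le hVU (le_of_eq hd)).symm
      have hb : finrank K ↥(G j) < finrank K ↥(G j ⊔ G' j) :=
        Submodule.finrank_lt_finrank_of_lt h1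
      have hsum : finrank K ↥(G j ⊔ G' j) + finrank K ↥(G j ⊓ G' j) =
          finrank K ↥(G j) + finrank K ↥(G' j) :=
        Submodule.finrank_sup_add_finrank_inf_eq (G j) (G' j)
      unfold subDist
      omega
    refine ⟨hlow _ (Nat.sInf_mem ⟨_, hmemj⟩), Nat.sInf_le hmemj⟩
  have hsum1 : (∑ j ∈ S, projCodeDist C j) ≤ codeDist r C := by
    calc (∑ j ∈ S, projCodeDist C j) ≤ ∑ j ∈ S, subDist (F j) (F' j) :=
          Finset.sum_le_sum (fun j hj => (key j hj).2)
      _ ≤ ∑ j ∈ Finset.Icc 1 r, subDist (F j) (F' j) :=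
          Finset.sum_le_sum_of_subset hSIcc
      _ = codeDist r C := heq.symm
  refine ⟨⟨S, hSIcc, hScard, fun j hj => by have := (key j hj).1; omega, hsum1⟩, ?_⟩
  calc 2 * (r - M + 1) = ∑ _j ∈ S, 2 := by
        rw [Finset.sum_const, hScard, smul_eq_mul, Nat.mul_comm]
    _ ≤ ∑ j ∈ S, projCodeDist C j := Finset.sum_le_sum (fun j hj => (key j hj).1)
    _ ≤ codeDist r C := hsum1
end

section
/- Let n ≥ 2, fix a type (t_1,...,t_r) and an index i, and let d be an even integer with d(i;v)^{(t,n)} ≤ d ≤ D(i;v)^{(t,n)}, where v is an even integer with 0 ≤ v ≤ min{2t_i, 2(n-t_i)}, d(i;v)^{(t,n)} = Σ_j max{0, v - 2|t_i - t_j|} and D(i;v)^{(t,n)} = Σ_j min{2t_j, 2(n-t_j), v + 2|t_i-t_j|}. Then there exists an integer vector (v_1,...,v_r) with v_i = v, all v_j even, 0 ≤ v_j ≤ min{2t_j, 2(n-t_j)}, |v_{j+1}-v_j| ≤ 2(t_{j+1}-t_j) for all j, and Σ_j v_j = d. -/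
open Finset

private lemma gap2 {a b : ℤ} (ha : Even a) (hb : Even b) (h : a < b) : a + 2 ≤ b := by
  obtain ⟨c, hc⟩ := ha; obtain ⟨e, he⟩ := hb; omega

private lemma even_min' {a b : ℤ} (ha : Even a) (hb : Even b) : Even (min a b) := by
  rcases le_total a b with h | h
  · rwa [min_eq_left h]
  · rwa [min_eq_right h]

private lemma even_max0 {x : ℤ} (hx : Even x) : Even (max 0 x) := by
  rcases le_total x 0 with h | h
  · rw [max_eq_left h]; exact Even.zero
  · rwa [max_eq_right h]

private lemma lip_max (vv c x y : ℤ) :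
    |max 0 (vv - 2 * |c - x|) - max 0 (vv - 2 * |c - y|)| ≤ 2 * |x - y| := by
  have h1 := abs_max_sub_max_le_max (0 : ℤ) (vv - 2 * |c - x|) 0 (vv - 2 * |c - y|)
  have h2 : |(vv - 2 * |c - x|) - (vv - 2 * |c - y|)| = 2 * |(|c - y| - |c - x|)| := by
    rw [show (vv - 2 * |c - x|) - (vv - 2 * |c - y|) = 2 * (|c - y| - |c - x|) by ring,
      abs_mul, abs_two]
  have h3 : |(|c - y| - |c - x|)| ≤ |x - y| := by
    calc |(|c - y| - |c - x|)| ≤ |(c - y) - (c - x)| := abs_abs_sub_abs_le_abs_sub _ _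
      _ = |x - y| := by rw [show (c - y) - (c - x) = x - y by ring]
  have h4 : max |(0:ℤ) - 0| |(vv - 2 * |c - x|) - (vv - 2 * |c - y|)|
      = |(vv - 2 * |c - x|) - (vv - 2 * |c - y|)| := by
    simp [abs_nonneg]
  rw [h4, h2] at h1
  linarith

private lemma lip_min3 (N vv c x y : ℤ) :
    |min (2 * x) (min (2 * (N - x)) (vv + 2 * |c - x|)) -
     min (2 * y) (min (2 * (N - y)) (vv + 2 * |c - y|))| ≤ 2 * |x - y| := by
  have h1 := abs_min_sub_min_le_max (2 * x) (min (2 * (N - x)) (vv + 2 * |c - x|))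
    (2 * y) (min (2 * (N - y)) (vv + 2 * |c - y|))
  have h2 := abs_min_sub_min_le_max (2 * (N - x)) (vv + 2 * |c - x|)
    (2 * (N - y)) (vv + 2 * |c - y|)
  have ha : |2 * x - 2 * y| = 2 * |x - y| := by
    rw [show 2 * x - 2 * y = 2 * (x - y) by ring, abs_mul]; norm_num
  have hb : |2 * (N - x) - 2 * (N - y)| = 2 * |x - y| := by
    rw [show 2 * (N - x) - 2 * (N - y) = 2 * (y - x) by ring, abs_mul, abs_sub_comm y x]
    norm_num
  have hc : |(vv + 2 * |c - x|) - (vv + 2 * |c - y|)| ≤ 2 * |x - y| := by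
    rw [show (vv + 2 * |c - x|) - (vv + 2 * |c - y|) = 2 * (|c - x| - |c - y|) by ring,
      abs_mul, abs_two]
    have h5 : |(|c - x| - |c - y|)| ≤ |x - y| := by
      calc |(|c - x| - |c - y|)| ≤ |(c - x) - (c - y)| := abs_abs_sub_abs_le_abs_sub _ _
        _ = |x - y| := by rw [show (c - x) - (c - y) = y - x by ring, abs_sub_comm]
    linarith
  refine le_trans h1 (max_le (le_of_eq ha) (le_trans h2 (max_le (le_of_eq hb) hc)))

theorem stmt17 (n r : ℕ) (hn : 2 ≤ n) (hr : 1 ≤ r)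
    (t : ℕ → ℕ) (ht1 : 1 ≤ t 1) (htr : t r < n)
    (htmono : ∀ j, 1 ≤ j → j < r → t j < t (j + 1))
    (i : ℕ) (hi1 : 1 ≤ i) (hir : i ≤ r)
    (v : ℤ) (hveven : Even v) (hv0 : 0 ≤ v)
    (hvle : v ≤ min (2 * (t i : ℤ)) (2 * ((n : ℤ) - (t i : ℤ))))
    (d : ℤ) (hdeven : Even d)
    (hdlow : (∑ j ∈ Finset.Icc 1 r, max 0 (v - 2 * |(t i : ℤ) - (t j : ℤ)|)) ≤ d)
    (hdhigh : d ≤ ∑ j ∈ Finset.Icc 1 r,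
      min (2 * (t j : ℤ)) (min (2 * ((n : ℤ) - (t j : ℤ)))
        (v + 2 * |(t i : ℤ) - (t j : ℤ)|))) :
    ∃ w : ℕ → ℤ, w i = v ∧
      (∀ j, 1 ≤ j → j ≤ r → Even (w j) ∧ 0 ≤ w j ∧
        w j ≤ min (2 * (t j : ℤ)) (2 * ((n : ℤ) - (t j : ℤ)))) ∧
      (∀ j, 1 ≤ j → j < r → |w (j + 1) - w j| ≤ 2 * ((t (j + 1) : ℤ) - (t j : ℤ))) ∧
      (∑ j ∈ Finset.Icc 1 r, w j) = d := by
  set L : ℕ → ℤ := fun j => max 0 (v - 2 * |(t i : ℤ) - (t j : ℤ)|) with hL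
  set U : ℕ → ℤ := fun j => min (2 * (t j : ℤ)) (min (2 * ((n : ℤ) - (t j : ℤ)))
      (v + 2 * |(t i : ℤ) - (t j : ℤ)|)) with hU
  -- monotonicity of t on [1, r]
  have hmonole : ∀ a b, 1 ≤ a → a ≤ b → b ≤ r → t a ≤ t b := by
    intro a b ha hab hbr
    induction b, hab using Nat.le_induction with
    | base => exact le_rfl
    | succ b hb ih =>
      exact le_trans (ih (by omega)) (htmono b (by omega) (by omega)).le
  have htjn : ∀ j, 1 ≤ j → j ≤ r → t j < n := fun j hj1 hjr =>
    lt_of_le_of_lt (hmonole j r hj1 hjr le_rfl) htr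
  -- basic facts about L and U
  have hLeven : ∀ j, Even (L j) := fun j =>
    even_max0 (hveven.sub (even_two_mul _))
  have hUeven : ∀ j, Even (U j) :=
    fun j => even_min' (even_two_mul _) (even_min' (even_two_mul _)
      (hveven.add (even_two_mul _)))
  have hL0 : ∀ j, 0 ≤ L j := fun j => le_max_left _ _
  have hLU : ∀ j, 1 ≤ j → j ≤ r → L j ≤ U j := by
    intro j hj1 hjr
    have h1 : (t i : ℤ) - t j ≤ |(t i : ℤ) - t j| := le_abs_self _
    have h2 : -|(t i : ℤ) - t j| ≤ (t i : ℤ) - t j := neg_abs_le _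
    have h3 : (0:ℤ) ≤ |(t i : ℤ) - t j| := abs_nonneg _
    have h4 : v ≤ 2 * (t i : ℤ) := le_trans hvle (min_le_left _ _)
    have h5 : v ≤ 2 * ((n : ℤ) - t i) := le_trans hvle (min_le_right _ _)
    have h6 : (t j : ℤ) < n := by exact_mod_cast htjn j hj1 hjr
    have h7 : (0:ℤ) ≤ (t j : ℤ) := Int.natCast_nonneg _
    simp only [hL, hU]
    refine max_le (le_min (by linarith) (le_min (by linarith) (by linarith)))
      (le_min (by linarith) (le_min (by linarith) (by linarith)))
  have hLi : L i = v := by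
    simp only [hL, sub_self, abs_zero, mul_zero, sub_zero]
    exact max_eq_right hv0
  have hUi : U i = v := by
    simp only [hU, sub_self, abs_zero, mul_zero, add_zero]
    have h4 : v ≤ 2 * (t i : ℤ) := le_trans hvle (min_le_left _ _)
    have h5 : v ≤ 2 * ((n : ℤ) - t i) := le_trans hvle (min_le_right _ _)
    omega
  have hUbd : ∀ j, U j ≤ min (2 * (t j : ℤ)) (2 * ((n : ℤ) - (t j : ℤ))) := by
    intro j
    exact le_min (min_le_left _ _) (le_trans (min_le_right _ _) (min_le_left _ _))
  -- Lipschitz facts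
  have hLlip : ∀ j, 1 ≤ j → j < r → |L (j+1) - L j| ≤ 2 * ((t (j+1) : ℤ) - t j) := by
    intro j hj1 hjr
    have hxy : (t j : ℤ) ≤ t (j+1) := by exact_mod_cast (htmono j hj1 hjr).le
    have := lip_max v ((t i : ℤ)) ((t (j+1) : ℤ)) ((t j : ℤ))
    rwa [abs_of_nonneg (by linarith : (0:ℤ) ≤ (t (j+1) : ℤ) - t j)] at this
  have hUlip : ∀ j, 1 ≤ j → j < r → |U (j+1) - U j| ≤ 2 * ((t (j+1) : ℤ) - t j) := by
    intro j hj1 hjr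
    have hxy : (t j : ℤ) ≤ t (j+1) := by exact_mod_cast (htmono j hj1 hjr).le
    have := lip_min3 (n : ℤ) v ((t i : ℤ)) ((t (j+1) : ℤ)) ((t j : ℤ))
    rwa [abs_of_nonneg (by linarith : (0:ℤ) ≤ (t (j+1) : ℤ) - t j)] at this
  -- main induction
  have key : ∀ k : ℕ, (∑ j ∈ Finset.Icc 1 r, L j) + 2 * k ≤ ∑ j ∈ Finset.Icc 1 r, U j →
      ∃ w : ℕ → ℤ, w i = v ∧
        (∀ j, 1 ≤ j → j ≤ r → Even (w j) ∧ L j ≤ w j ∧ w j ≤ U j) ∧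
        (∀ j, 1 ≤ j → j < r → |w (j+1) - w j| ≤ 2 * ((t (j+1) : ℤ) - t j)) ∧
        (∑ j ∈ Finset.Icc 1 r, w j) = (∑ j ∈ Finset.Icc 1 r, L j) + 2 * k := by
    intro k
    induction k with
    | zero =>
      intro _
      exact ⟨L, hLi, fun j hj1 hjr => ⟨hLeven j, le_rfl, hLU j hj1 hjr⟩, hLlip, by simp⟩
    | succ k ih =>
      intro hk
      obtain ⟨w, hwi, hwb, hwlip, hwsum⟩ := ih (by push_cast at hk ⊢; linarith)
      have hwltU : ∑ j ∈ Finset.Icc 1 r, w j < ∑ j ∈ Finset.Icc 1 r, U j := by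
        push_cast at hk; omega
      -- slack set
      set s : Finset ℕ := (Finset.Icc 1 r).filter (fun j => w j < U j) with hs
      have hsne : s.Nonempty := by
        by_contra hne
        rw [Finset.not_nonempty_iff_eq_empty] at hne
        have hall : ∀ j ∈ Finset.Icc 1 r, U j ≤ w j := by
          intro j hj
          by_contra hc
          have : j ∈ s := Finset.mem_filter.mpr ⟨hj, by omega⟩
          rw [hne] at this; exact absurd this (Finset.notMem_empty _)
        exact absurd (Finset.sum_le_sum hall) (by omega)
      obtain ⟨j0, hj0s, hj0min⟩ := Finset.exists_min_image s w hsne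
      have hj0mem : j0 ∈ Finset.Icc 1 r := (Finset.mem_filter.mp hj0s).1
      have hj0lt : w j0 < U j0 := (Finset.mem_filter.mp hj0s).2
      have hj01 : 1 ≤ j0 := (Finset.mem_Icc.mp hj0mem).1
      have hj0r : j0 ≤ r := (Finset.mem_Icc.mp hj0mem).2
      have hj0i : j0 ≠ i := by
        intro h
        rw [h, hwi, ← hUi] at hj0lt
        exact lt_irrefl _ hj0lt
      have hj0gap : w j0 + 2 ≤ U j0 := gap2 (hwb j0 hj01 hj0r).1 (hUeven j0) hj0lt
      refine ⟨Function.update w j0 (w j0 + 2), ?_, ?_, ?_, ?_⟩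
      · rw [Function.update_of_ne (Ne.symm hj0i)]; exact hwi
      · intro j hj1 hjr
        by_cases hjj : j = j0
        · subst hjj
          rw [Function.update_self]
          exact ⟨((hwb j hj1 hjr).1).add even_two, le_trans (hwb j hj1 hjr).2.1 (by omega),
            hj0gap⟩
        · rw [Function.update_of_ne hjj]
          exact hwb j hj1 hjr
      · intro j hj1 hjr
        have hΔ : (1:ℤ) ≤ (t (j+1) : ℤ) - t j := by
          have := htmono j hj1 hjr; omega
        have hold := hwlip j hj1 hjr
        rw [abs_le] at hold
        by_cases h1 : j0 = j
        · -- updated position is j (left)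
          subst h1
          rw [Function.update_self, Function.update_of_ne (by omega)]
          have hup : w (j0+1) + 2 * ((t (j0+1) : ℤ) - t j0) ≥ w j0 + 2 := by
            by_contra hv2
            push_neg at hv2
            -- then w j0 - w (j0+1) = 2Δ (using evenness) and j0+1 is slack with smaller value
            have he1 := (hwb j0 hj01 hj0r).1
            have he2 := (hwb (j0+1) (by omega) (by omega)).1
            obtain ⟨c1, hc1⟩ := he1; obtain ⟨c2, hc2⟩ := he2
            have heq : w j0 - w (j0+1) = 2 * ((t (j0+1) : ℤ) - t j0) := by omega
            have hU2 := hUlip j0 hj01 hjr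
            rw [abs_le] at hU2
            have hs2 : w (j0+1) < U (j0+1) := by omega
            have : j0 + 1 ∈ s := Finset.mem_filter.mpr
              (⟨Finset.mem_Icc.mpr ⟨by omega, by omega⟩, hs2⟩)
            have := hj0min (j0+1) this
            omega
          rw [abs_le]
          constructor <;> omega
        · by_cases h2 : j0 = j + 1
          · -- updated position is j+1 (right)
            subst h2
            rw [Function.update_self, Function.update_of_ne (by omega)]
            have hup : w j + 2 * ((t (j+1) : ℤ) - t j) ≥ w (j+1) + 2 := by
              by_contra hv2
              push_neg at hv2
              have he1 := (hwb j hj1 (by omega)).1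
              have he2 := (hwb (j+1) (by omega) hj0r).1
              obtain ⟨c1, hc1⟩ := he1; obtain ⟨c2, hc2⟩ := he2
              have heq : w (j+1) - w j = 2 * ((t (j+1) : ℤ) - t j) := by omega
              have hU2 := hUlip j hj1 hjr
              rw [abs_le] at hU2
              have hs2 : w j < U j := by omega
              have : j ∈ s := Finset.mem_filter.mpr
                (⟨Finset.mem_Icc.mpr ⟨hj1, by omega⟩, hs2⟩)
              have := hj0min j this
              omega
            rw [abs_le]
            constructor <;> omega
          · rw [Function.update_of_ne (by omega), Function.update_of_ne (by omega)]
            exact hwlip j hj1 hjr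
      · rw [Finset.sum_update_of_mem hj0mem, ← Finset.erase_eq]
        rw [← Finset.sum_erase_add _ _ hj0mem] at hwsum
        push_cast
        push_cast at hwsum
        linarith
  -- conclude
  have hLsum_even : Even (∑ j ∈ Finset.Icc 1 r, L j) := Finset.even_sum _ (fun j _ => hLeven j)
  obtain ⟨c, hc⟩ := hdeven.sub hLsum_even
  have hdlow' : (∑ j ∈ Finset.Icc 1 r, L j) ≤ d := hdlow
  have hc0 : 0 ≤ c := by omega
  have hdk : d = (∑ j ∈ Finset.Icc 1 r, L j) + 2 * (c.toNat : ℤ) := by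
    rw [Int.toNat_of_nonneg hc0]; omega
  obtain ⟨w, hwi, hwb, hwlip, hwsum⟩ := key c.toNat (by rw [← hdk]; exact hdhigh)
  refine ⟨w, hwi, ?_, hwlip, by rw [hwsum, ← hdk]⟩
  intro j hj1 hjr
  exact ⟨(hwb j hj1 hjr).1, le_trans (hL0 j) (hwb j hj1 hjr).2.1,
    le_trans (hwb j hj1 hjr).2.2 (hUbd j)⟩
end

section
/- Let (v_1,...,v_r) be any integer vector with each v_j even, 0 ≤ v_j ≤ min{2t_j, 2(n-t_j)}, |v_{j+1}-v_j| ≤ 2(t_{j+1}-t_j), and v_i = 0 for each i in a set {i_1 < ... < i_M} ⊆ {1,...,r}. Then Σ_{j=1}^r v_j ≤ Σ_{j=1}^r min{2t_j, 2(n-t_j), 2|t_j - t_{i_1}|, ..., 2|t_j - t_{i_M}|}. -/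
open Finset

theorem stmt19 (n r M : ℕ) (hn : 2 ≤ n) (hr : 1 ≤ r) (hM : 1 ≤ M) (hMr : M ≤ r)
    (t : ℕ → ℕ) (ht1 : 1 ≤ t 1) (htr : t r < n)
    (htmono : ∀ j, 1 ≤ j → j < r → t j < t (j + 1))
    (i : ℕ → ℕ) (hi1 : 1 ≤ i 1) (hiM : i M ≤ r)
    (himono : ∀ l, 1 ≤ l → l < M → i l < i (l + 1))
    (v : ℕ → ℤ)
    (hveven : ∀ j, 1 ≤ j → j ≤ r → Even (v j))
    (hvbounds : ∀ j, 1 ≤ j → j ≤ r →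
      0 ≤ v j ∧ v j ≤ min (2 * (t j : ℤ)) (2 * ((n : ℤ) - (t j : ℤ))))
    (hvadj : ∀ j, 1 ≤ j → j < r →
      |v (j + 1) - v j| ≤ 2 * ((t (j + 1) : ℤ) - (t j : ℤ)))
    (hzero : ∀ l, 1 ≤ l → l ≤ M → v (i l) = 0) :
    (∑ j ∈ Finset.Icc 1 r, v j) ≤
      ∑ j ∈ Finset.Icc 1 r,
        min (2 * (t j : ℤ)) (min (2 * ((n : ℤ) - (t j : ℤ)))
          ((Finset.Icc 1 M).inf' (Finset.nonempty_Icc.mpr hM)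
            (fun l => 2 * |(t j : ℤ) - (t (i l) : ℤ)|))) := by
  -- monotonicity of t
  have tmono : ∀ a, 1 ≤ a → ∀ b, a ≤ b → b ≤ r → t a ≤ t b := by
    intro a ha b hab hbr
    induction b, hab using Nat.le_induction with
    | base => exact le_rfl
    | succ b hab ih =>
      have hbr' : b ≤ r := le_of_lt (Nat.lt_of_succ_le hbr)
      exact le_trans (ih hbr') (le_of_lt (htmono b (le_trans ha hab) (Nat.lt_of_succ_le hbr)))
  -- key telescoping bound
  have key : ∀ a, 1 ≤ a → ∀ b, a ≤ b → b ≤ r → |v b - v a| ≤ 2 * ((t b : ℤ) - (t a : ℤ)) := by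
    intro a ha b hab hbr
    induction b, hab using Nat.le_induction with
    | base => simp
    | succ b hab ih =>
      have hbr' : b ≤ r := le_of_lt (Nat.lt_of_succ_le hbr)
      have h1 := hvadj b (le_trans ha hab) (Nat.lt_of_succ_le hbr)
      calc |v (b+1) - v a| ≤ |v (b+1) - v b| + |v b - v a| := by
              have := abs_sub_le (v (b+1)) (v b) (v a); linarith
        _ ≤ 2 * ((t (b+1) : ℤ) - (t b : ℤ)) + 2 * ((t b : ℤ) - (t a : ℤ)) := by
              linarith [ih hbr']
        _ = 2 * ((t (b+1) : ℤ) - (t a : ℤ)) := by ring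
  -- monotonicity of i
  have imono : ∀ a, 1 ≤ a → ∀ b, a ≤ b → b ≤ M → i a ≤ i b := by
    intro a ha b hab hbM
    induction b, hab using Nat.le_induction with
    | base => exact le_rfl
    | succ b hab ih =>
      have hbM' : b ≤ M := le_of_lt (Nat.lt_of_succ_le hbM)
      exact le_trans (ih hbM') (le_of_lt (himono b (le_trans ha hab) (Nat.lt_of_succ_le hbM)))
  apply Finset.sum_le_sum
  intro j hj
  rw [Finset.mem_Icc] at hj
  obtain ⟨hj1, hjr⟩ := hj
  obtain ⟨hv0, hvle⟩ := hvbounds j hj1 hjr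
  refine le_min (le_trans hvle (min_le_left _ _)) (le_min (le_trans hvle (min_le_right _ _)) ?_)
  apply Finset.le_inf'
  intro l hl
  rw [Finset.mem_Icc] at hl
  obtain ⟨hl1, hlM⟩ := hl
  have hil1 : 1 ≤ i l := le_trans hi1 (imono 1 le_rfl l hl1 hlM)
  have hilr : i l ≤ r := le_trans (imono l hl1 M hlM le_rfl) hiM
  have hz : v (i l) = 0 := hzero l hl1 hlM
  rcases le_total j (i l) with h | h
  · have hk := key j hj1 (i l) h hilr
    rw [hz] at hk
    have htle : (t j : ℤ) ≤ (t (i l) : ℤ) := by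
      exact_mod_cast tmono j hj1 (i l) h hilr
    have : |(t j : ℤ) - (t (i l) : ℤ)| = (t (i l) : ℤ) - (t j : ℤ) := by
      rw [abs_sub_comm]; exact abs_of_nonneg (by linarith)
    rw [this]
    have : |(0 : ℤ) - v j| = |v j| := by simp
    rw [this] at hk
    linarith [le_abs_self (v j)]
  · have hk := key (i l) hil1 j h hjr
    rw [hz] at hk
    have htle : (t (i l) : ℤ) ≤ (t j : ℤ) := by
      exact_mod_cast tmono (i l) hil1 j h hjr
    have : |(t j : ℤ) - (t (i l) : ℤ)| = (t j : ℤ) - (t (i l) : ℤ) :=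
      abs_of_nonneg (by linarith)
    rw [this]
    have : |v j - 0| = |v j| := by simp
    rw [this] at hk
    linarith [le_abs_self (v j)]
end
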